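/- The discrete Dini surface f(k,ℓ) = (−2k sin δ₁ + sin α · tanh χ(k,ℓ), −sin α · sech χ(k,ℓ) · cos(2ℓδ₂), −sin α · sech χ(k,ℓ) · sin(2ℓδ₂)) with the Gauss map n(k,ℓ) = (sech χ · sin α, tanh χ · cos(2ℓδ₂) sin α − cos α sin(2ℓδ₂), tanh χ · sin(2ℓδ₂) sin α + cos α cos(2ℓδ₂)) satisfies the edge-constraint condition (f(k+1,ℓ) − f(k,ℓ)) · (n(k+1,ℓ) + n(k,ℓ)) = 0 in the first lattice direction, where χ(k,ℓ) = c₀ + k·a − ℓ·b with a = log((sin α + sin δ₁)/(sin α − sin δ₁)). -/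

import Mathlib

/-- Euclidean dot product on `ℝ³`. -/
def dot3 (u v : Fin 3 → ℝ) : ℝ := u 0 * v 0 + u 1 * v 1 + u 2 * v 2

/-- The discrete Dini surface. -/
noncomputable def fDini (α δ₁ δ₂ : ℝ) (χ : ℤ → ℤ → ℝ) (k ℓ : ℤ) : Fin 3 → ℝ :=
  ![-2 * k * Real.sin δ₁ + Real.sin α * Real.tanh (χ k ℓ),
    -Real.sin α * (1 / Real.cosh (χ k ℓ)) * Real.cos (2 * ℓ * δ₂),
    -Real.sin α * (1 / Real.cosh (χ k ℓ)) * Real.sin (2 * ℓ * δ₂)]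

/-- Its Gauss map. -/
noncomputable def nDini (α δ₂ : ℝ) (χ : ℤ → ℤ → ℝ) (k ℓ : ℤ) : Fin 3 → ℝ :=
  ![(1 / Real.cosh (χ k ℓ)) * Real.sin α,
    Real.tanh (χ k ℓ) * Real.cos (2 * ℓ * δ₂) * Real.sin α -
      Real.cos α * Real.sin (2 * ℓ * δ₂),
    Real.tanh (χ k ℓ) * Real.sin (2 * ℓ * δ₂) * Real.sin α +
      Real.cos α * Real.cos (2 * ℓ * δ₂)]

/-!
Along a first-direction edge χ advances by `a`. Once `cos² + sin² = 1` is used, the edge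
constraint becomes `sin α (sinh (χ + a) - sinh χ) = sin δ₁ (cosh χ + cosh (χ + a))`. By the
sum-to-product formulas both sides carry the factor `2 cosh (χ + a / 2)`, which leaves
`tanh (a / 2) = sin δ₁ / sin α`, and this is exactly how `a` was chosen.
-/

namespace Real

theorem cosh_add_cosh (x y : ℝ) :
    cosh x + cosh y = 2 * cosh ((x + y) / 2) * cosh ((x - y) / 2) := by
  obtain ⟨u, v, rfl, rfl⟩ : ∃ u v : ℝ, x = u + v ∧ y = u - v :=
    ⟨(x + y) / 2, (x - y) / 2, by ring, by ring⟩
  rw [show (u + v + (u - v)) / 2 = u by ring, show (u + v - (u - v)) / 2 = v by ring,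
    cosh_add, cosh_sub]
  ring

theorem sinh_sub_sinh (x y : ℝ) :
    sinh x - sinh y = 2 * cosh ((x + y) / 2) * sinh ((x - y) / 2) := by
  obtain ⟨u, v, rfl, rfl⟩ : ∃ u v : ℝ, x = u + v ∧ y = u - v :=
    ⟨(x + y) / 2, (x - y) / 2, by ring, by ring⟩
  rw [show (u + v + (u - v)) / 2 = u by ring, show (u + v - (u - v)) / 2 = v by ring,
    sinh_add, sinh_sub]
  ring

theorem tanh_half_log_div {s d : ℝ} (h : |d| < s) :
    tanh (log ((s + d) / (s - d)) / 2) = d / s := by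
  obtain ⟨hsd, hds⟩ := abs_lt.1 h
  have hE : exp (log ((s + d) / (s - d)) / 2) ^ 2 = (s + d) / (s - d) := by
    rw [← exp_nat_mul, Nat.cast_ofNat, mul_div_cancel₀ _ two_ne_zero,
      exp_log (div_pos (by linarith) (by linarith))]
  have hs : s ≠ 0 := by linarith
  rw [tanh_eq_sinh_div_cosh, sinh_eq, cosh_eq, exp_neg]
  field_simp
  field_simp at hE
  linear_combination hE

theorem mul_sinh_add_sub_sinh {s d a : ℝ} (hs : s ≠ 0) (ha : tanh (a / 2) = d / s) (x : ℝ) :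
    s * (sinh (x + a) - sinh x) = d * (cosh x + cosh (x + a)) := by
  rw [tanh_eq_sinh_div_cosh, div_eq_div_iff (cosh_pos _).ne' hs] at ha
  rw [sinh_sub_sinh, add_comm (cosh x), cosh_add_cosh, add_sub_cancel_left]
  linear_combination 2 * cosh ((x + a + x) / 2) * ha

end Real

open Real

theorem dot3_fDini_edge (α δ₁ δ₂ : ℝ) (χ : ℤ → ℤ → ℝ) (k ℓ : ℤ) :
    dot3 (fDini α δ₁ δ₂ χ (k + 1) ℓ - fDini α δ₁ δ₂ χ k ℓ)
        (nDini α δ₂ χ (k + 1) ℓ + nDini α δ₂ χ k ℓ) =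
      2 * sin α * (sin α * (sinh (χ (k + 1) ℓ) - sinh (χ k ℓ)) -
        sin δ₁ * (cosh (χ k ℓ) + cosh (χ (k + 1) ℓ))) / (cosh (χ k ℓ) * cosh (χ (k + 1) ℓ)) := by
  simp only [dot3, fDini, nDini, Pi.sub_apply, Pi.add_apply, Matrix.cons_val_zero,
    Matrix.cons_val_one, Matrix.cons_val_two, Matrix.head_cons, Matrix.tail_cons,
    tanh_eq_sinh_div_cosh]
  push_cast
  set x := χ k ℓ
  set y := χ (k + 1) ℓ
  have hx := (cosh_pos x).ne'
  have hy := (cosh_pos y).ne'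
  field_simp
  linear_combination sin α ^ 2 * (cosh x * cosh y * (sinh y - sinh x) + sinh x * cosh y ^ 2
    - sinh y * cosh x ^ 2) * cos_sq_add_sin_sq (2 * ℓ * δ₂)

theorem stmt_12_general (α δ₁ δ₂ c₀ b : ℝ)
    (hδ₁pos : 0 < Real.sin δ₁) (hαδ : Real.sin δ₁ < Real.sin α)
    (a : ℝ) (ha : a = Real.log ((Real.sin α + Real.sin δ₁) / (Real.sin α - Real.sin δ₁)))
    (χ : ℤ → ℤ → ℝ) (hχ : ∀ k ℓ : ℤ, χ k ℓ = c₀ + k * a - ℓ * b) :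
    ∀ k ℓ : ℤ,
      dot3 (fDini α δ₁ δ₂ χ (k + 1) ℓ - fDini α δ₁ δ₂ χ k ℓ)
        (nDini α δ₂ χ (k + 1) ℓ + nDini α δ₂ χ k ℓ) = 0 := by
  intro k ℓ
  have hstep : χ (k + 1) ℓ = χ k ℓ + a := by
    rw [hχ, hχ]
    push_cast
    ring
  have hhalf : tanh (a / 2) = sin δ₁ / sin α :=
    ha ▸ tanh_half_log_div (abs_lt.2 ⟨by linarith, hαδ⟩)
  rw [dot3_fDini_edge, hstep, mul_sinh_add_sub_sinh (by linarith) hhalf, sub_self,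
    mul_zero, zero_div]

/-- the discrete Dini surface satisfies the edge-constraint condition
in the first lattice direction. -/
theorem stmt_12 (α δ₁ δ₂ c₀ b : ℝ)
    (hα : α ∈ Set.Ioo (-Real.pi) Real.pi) (hα0 : α ≠ 0)
    (hδ₁pos : 0 < Real.sin δ₁) (hαδ : Real.sin δ₁ < Real.sin α)
    (a : ℝ) (ha : a = Real.log ((Real.sin α + Real.sin δ₁) / (Real.sin α - Real.sin δ₁)))
    (χ : ℤ → ℤ → ℝ) (hχ : ∀ k ℓ : ℤ, χ k ℓ = c₀ + k * a - ℓ * b) :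
    ∀ k ℓ : ℤ,
      dot3 (fDini α δ₁ δ₂ χ (k + 1) ℓ - fDini α δ₁ δ₂ χ k ℓ)
        (nDini α δ₂ χ (k + 1) ℓ + nDini α δ₂ χ k ℓ) = 0 :=
  stmt_12_general α δ₁ δ₂ c₀ b hδ₁pos hαδ a ha χ hχ
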